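/- Let G be a planar PCC graph and let Z be the number of vertices v of G whose face vector f(v) is (5,6,7) or (3,3,5,7). Then Z ≤ 210. -/

import Mathlib

/-!
We formalize finite graphs 2-cell embedded in the sphere via combinatorial maps
(rotation systems): a finite set of darts together with a vertex-rotation
permutation `σ` and a fixed-point-free edge involution `α`.  Vertices, edges
and faces are the orbits of `σ`, `α` and of the face permutation `φ = σ ∘ α`
respectively; Euler's formula `#V - #E + #F = 2` says that the underlying
closed orientable surface is the sphere.
-/

/-- A finite combinatorial map (rotation system), encoding a finite graph
2-cell embedded in a closed orientable surface. -/
structure PlaneGraph where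
  /-- the type of darts (oriented edges) -/
  D : Type
  fintypeD : Fintype D
  /-- the counterclockwise rotation of the darts around their base vertex -/
  σ : Equiv.Perm D
  /-- the involution sending a dart to the opposite dart of the same edge -/
  α : Equiv.Perm D
  α_invol : ∀ d, α (α d) = d
  α_fixfree : ∀ d, α d ≠ d

namespace PlaneGraph

variable (G : PlaneGraph)

instance : Fintype G.D := G.fintypeD

/-- The face permutation. -/
def φ : Equiv.Perm G.D := G.σ * G.α

/-- Darts based at the same vertex, i.e. in the same `σ`-orbit. -/
def vSetoid : Setoid G.D :=
  ⟨G.σ.SameCycle, ⟨fun _ => Equiv.Perm.SameCycle.refl _ _,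
    fun h => h.symm, fun h h' => h.trans h'⟩⟩

/-- Darts of the same edge, i.e. in the same `α`-orbit. -/
def eSetoid : Setoid G.D :=
  ⟨G.α.SameCycle, ⟨fun _ => Equiv.Perm.SameCycle.refl _ _,
    fun h => h.symm, fun h h' => h.trans h'⟩⟩

/-- Darts of the same face, i.e. in the same `φ`-orbit. -/
def fSetoid : Setoid G.D :=
  ⟨G.φ.SameCycle, ⟨fun _ => Equiv.Perm.SameCycle.refl _ _,
    fun h => h.symm, fun h h' => h.trans h'⟩⟩

/-- The vertices of the graph. -/
def Vertex := Quotient G.vSetoid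

/-- The edges of the graph. -/
def Edge := Quotient G.eSetoid

/-- The faces of the embedded graph. -/
def Face := Quotient G.fSetoid

noncomputable instance : Fintype G.Vertex :=
  @Quotient.fintype _ _ G.vSetoid (Classical.decRel _)

noncomputable instance : Fintype G.Edge :=
  @Quotient.fintype _ _ G.eSetoid (Classical.decRel _)

noncomputable instance : Fintype G.Face :=
  @Quotient.fintype _ _ G.fSetoid (Classical.decRel _)

/-- The base vertex of a dart. -/
def vertexOf (d : G.D) : G.Vertex := Quotient.mk G.vSetoid d

/-- The edge underlying a dart. -/
def edgeOf (d : G.D) : G.Edge := Quotient.mk G.eSetoid d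

/-- The face on the left of a dart. -/
def faceOf (d : G.D) : G.Face := Quotient.mk G.fSetoid d

open scoped Classical in
/-- The darts based at a given vertex. -/
noncomputable def dartsAt (v : G.Vertex) : Finset G.D :=
  Finset.univ.filter fun d => G.vertexOf d = v

open scoped Classical in
/-- The darts of a given face. -/
noncomputable def dartsOfFace (f : G.Face) : Finset G.D :=
  Finset.univ.filter fun d => G.faceOf d = f

open scoped Classical in
/-- The darts of a given edge. -/
noncomputable def dartsOfEdge (e : G.Edge) : Finset G.D :=
  Finset.univ.filter fun d => G.edgeOf d = e

/-- The degree of a vertex. -/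
noncomputable def degree (v : G.Vertex) : ℕ := (G.dartsAt v).card

/-- The size of a face: the number of its boundary edges, counted with
multiplicity. -/
noncomputable def faceSize (f : G.Face) : ℕ := (G.dartsOfFace f).card

/-- The multiset of faces incident to a vertex (with multiplicity). -/
noncomputable def facesAt (v : G.Vertex) : Multiset G.Face :=
  (G.dartsAt v).val.map G.faceOf

/-- The face vector of a vertex: the multiset of the sizes of the faces
incident to it (with multiplicity). -/
noncomputable def faceVector (v : G.Vertex) : Multiset ℕ :=
  (G.dartsAt v).val.map fun d => G.faceSize (G.faceOf d)

/-- The multiset of the boundary vertices of a face (with multiplicity). -/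
noncomputable def boundaryVertices (f : G.Face) : Multiset G.Vertex :=
  (G.dartsOfFace f).val.map G.vertexOf

/-- The multiset of the boundary edges of a face (with multiplicity). -/
noncomputable def boundaryEdges (f : G.Face) : Multiset G.Edge :=
  (G.dartsOfFace f).val.map G.edgeOf

/-- The side vector of an edge: the multiset of the sizes of the two faces
lying on either side of it. -/
noncomputable def sideVector (e : G.Edge) : Multiset ℕ :=
  (G.dartsOfEdge e).val.map fun d => G.faceSize (G.faceOf d)

/-- The combinatorial curvature of a vertex:
`K(v) = 1 - deg(v)/2 + ∑_{σ ∈ F(v)} 1/|σ|`. -/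
noncomputable def curvature (v : G.Vertex) : ℚ :=
  1 - (G.degree v : ℚ) / 2 + ∑ d ∈ G.dartsAt v, (1 : ℚ) / (G.faceSize (G.faceOf d))

/-- The graph is connected. -/
def Connected : Prop :=
  ∀ d d' : G.D, Relation.ReflTransGen (fun a b => G.σ a = b ∨ G.α a = b) d d'

/-- The graph has no loops. -/
def Loopless : Prop := ∀ d : G.D, G.vertexOf (G.α d) ≠ G.vertexOf d

/-- The graph has no multiple edges: an edge is determined by its two
endpoints. -/
def NoMultiEdges : Prop :=
  ∀ d d' : G.D, G.vertexOf d = G.vertexOf d' →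
    G.vertexOf (G.α d) = G.vertexOf (G.α d') → G.edgeOf d = G.edgeOf d'

/-- Euler's formula `#V - #E + #F = 2`: the graph is 2-cell embedded in the
sphere. -/
def IsSphere : Prop :=
  (Fintype.card G.Vertex : ℤ) - (Fintype.card G.Edge : ℤ) +
    (Fintype.card G.Face : ℤ) = 2

/-- The multiset of the sizes of all faces of the graph. -/
noncomputable def allFaceSizes : Multiset ℕ :=
  (Finset.univ : Finset G.Face).val.map G.faceSize

/-- `G` is a prism of some order `N`: it has `2N` vertices, two faces of size
`N` and `N` faces of size 4, and every vertex is incident to faces of sizes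
`4, 4, N`. -/
def IsPrism : Prop :=
  ∃ N : ℕ, Fintype.card G.Vertex = 2 * N ∧
    (∀ v : G.Vertex, G.faceVector v = {4, 4, N}) ∧
    G.allFaceSizes = Multiset.replicate N 4 + {N, N}

/-- `G` is an antiprism of some order `N`: it has `2N` vertices, two faces of
size `N` and `2N` faces of size 3, and every vertex is incident to faces of
sizes `3, 3, 3, N`. -/
def IsAntiprism : Prop :=
  ∃ N : ℕ, Fintype.card G.Vertex = 2 * N ∧
    (∀ v : G.Vertex, G.faceVector v = {3, 3, 3, N}) ∧
    G.allFaceSizes = Multiset.replicate (2 * N) 3 + {N, N}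

/-- A planar PCC graph: a finite simple connected planar graph, 2-cell
embedded in the sphere, which is not a prism or an antiprism, all of whose
vertices have degree at least 3 and strictly positive combinatorial
curvature. -/
def IsPCC : Prop :=
  G.Connected ∧ G.Loopless ∧ G.NoMultiEdges ∧ G.IsSphere ∧
    (∀ v : G.Vertex, 3 ≤ G.degree v) ∧
    (∀ v : G.Vertex, 0 < G.curvature v) ∧
    ¬G.IsPrism ∧ ¬G.IsAntiprism

end PlaneGraph

/-!
Gauss–Bonnet: summing `K(v)` over the vertices, every face contributes `|σ| · 1/|σ| = 1` and
every edge `-2 · 1/2 = -1`, so the total curvature is the Euler characteristic `V - E + F = 2`.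
A vertex with face vector `(5,6,7)` or `(3,3,5,7)` has curvature
`1 - 3/2 + 1/5 + 1/6 + 1/7 = 1 - 2 + 2/3 + 1/5 + 1/7 = 1/105`, and all curvatures are positive,
so there are at most `2 · 105 = 210` such vertices.
-/

namespace PlaneGraph

open scoped Classical

variable (G : PlaneGraph)

theorem sum_dartsAt {M : Type*} [AddCommMonoid M] (g : G.D → M) :
    ∑ v, ∑ d ∈ G.dartsAt v, g d = ∑ d, g d :=
  Finset.sum_fiberwise _ _ _

theorem sum_dartsOfFace {M : Type*} [AddCommMonoid M] (g : G.D → M) :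
    ∑ f, ∑ d ∈ G.dartsOfFace f, g d = ∑ d, g d :=
  Finset.sum_fiberwise _ _ _

theorem sum_dartsOfEdge {M : Type*} [AddCommMonoid M] (g : G.D → M) :
    ∑ e, ∑ d ∈ G.dartsOfEdge e, g d = ∑ d, g d :=
  Finset.sum_fiberwise _ _ _

theorem mem_dartsOfFace {f : G.Face} {d : G.D} : d ∈ G.dartsOfFace f ↔ G.faceOf d = f := by
  simp [dartsOfFace]

theorem mem_dartsOfEdge {e : G.Edge} {d : G.D} : d ∈ G.dartsOfEdge e ↔ G.edgeOf d = e := by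
  simp [dartsOfEdge]

theorem faceSize_pos (f : G.Face) : 0 < G.faceSize f := by
  induction f using Quotient.inductionOn with
  | h d => exact Finset.card_pos.mpr ⟨d, G.mem_dartsOfFace.mpr rfl⟩

theorem pow_α_apply_mem (d : G.D) (n : ℕ) : (G.α ^ n) d ∈ ({d, G.α d} : Finset G.D) := by
  induction n with
  | zero => simp
  | succ n ih =>
    rw [pow_succ', Equiv.Perm.mul_apply]
    rcases Finset.mem_insert.mp ih with h | h <;> simp_all [G.α_invol]

theorem dartsOfEdge_edgeOf (d : G.D) : G.dartsOfEdge (G.edgeOf d) = {d, G.α d} := by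
  ext d'
  rw [G.mem_dartsOfEdge]
  constructor
  · intro h
    obtain ⟨n, -, rfl⟩ := (Quotient.exact' h.symm : G.α.SameCycle d d').exists_nat_pow_eq
    exact G.pow_α_apply_mem d n
  · intro h
    rcases Finset.mem_insert.mp h with rfl | h
    · rfl
    · rw [Finset.mem_singleton.mp h]
      exact Quotient.sound' ⟨1, by simp [G.α_invol]⟩

theorem card_dartsOfEdge (e : G.Edge) : (G.dartsOfEdge e).card = 2 := by
  induction e using Quotient.inductionOn with
  | h d =>
    rw [show Quotient.mk G.eSetoid d = G.edgeOf d from rfl, G.dartsOfEdge_edgeOf,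
      Finset.card_pair (G.α_fixfree d).symm]

theorem card_darts : Fintype.card G.D = 2 * Fintype.card G.Edge := by
  simp_rw [← Finset.card_univ, Finset.card_eq_sum_ones, ← G.sum_dartsOfEdge,
    ← Finset.card_eq_sum_ones, G.card_dartsOfEdge, Finset.sum_const, smul_eq_mul, mul_comm]

theorem sum_degree : ∑ v, G.degree v = 2 * Fintype.card G.Edge := by
  simp_rw [degree, Finset.card_eq_sum_ones, G.sum_dartsAt, ← Finset.card_eq_sum_ones,
    Finset.card_univ, G.card_darts]

theorem sum_dartsOfFace_inv_faceSize (f : G.Face) :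
    ∑ d ∈ G.dartsOfFace f, (1 : ℚ) / G.faceSize (G.faceOf d) = 1 := by
  have hsize : (G.faceSize f : ℚ) ≠ 0 := by exact_mod_cast (G.faceSize_pos f).ne'
  rw [Finset.sum_congr rfl fun d hd => by rw [G.mem_dartsOfFace.mp hd], Finset.sum_const,
    nsmul_eq_mul, ← faceSize]
  field_simp

theorem sum_curvature :
    ∑ v, G.curvature v =
      (Fintype.card G.Vertex : ℚ) - Fintype.card G.Edge + Fintype.card G.Face := by
  have hdeg : ∑ v, (G.degree v : ℚ) = 2 * Fintype.card G.Edge := by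
    exact_mod_cast G.sum_degree
  have hfaces :
      ∑ v, ∑ d ∈ G.dartsAt v, (1 : ℚ) / G.faceSize (G.faceOf d) = Fintype.card G.Face := by
    rw [G.sum_dartsAt, ← G.sum_dartsOfFace]
    simp only [G.sum_dartsOfFace_inv_faceSize, Finset.sum_const, Finset.card_univ, nsmul_eq_mul,
      mul_one]
  simp only [curvature, Finset.sum_add_distrib, Finset.sum_sub_distrib, ← Finset.sum_div, hdeg,
    hfaces, Finset.sum_const, Finset.card_univ, nsmul_eq_mul, mul_one]
  ring

theorem sum_curvature_eq_two (h : G.IsSphere) : ∑ v, G.curvature v = 2 := by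
  rw [sum_curvature]
  unfold IsSphere at h
  exact_mod_cast h

theorem curvature_eq_of_faceVector (v : G.Vertex) :
    G.curvature v = 1 - ((G.faceVector v).card : ℚ) / 2 +
      ((G.faceVector v).map fun n : ℕ => (1 : ℚ) / n).sum := by
  rw [curvature, faceVector, Multiset.card_map, Multiset.map_map]
  rfl

theorem ncard_mul_le_sum_curvature (hpos : ∀ v, 0 ≤ G.curvature v) {s : Set G.Vertex} {c : ℚ}
    (hs : ∀ v ∈ s, c ≤ G.curvature v) : s.ncard * c ≤ ∑ v, G.curvature v := by
  rw [Set.ncard_eq_toFinset_card', ← nsmul_eq_mul, ← Finset.sum_const]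
  calc ∑ _ ∈ s.toFinset, c ≤ ∑ v ∈ s.toFinset, G.curvature v :=
        Finset.sum_le_sum fun v hv => hs v (Set.mem_toFinset.mp hv)
    _ ≤ ∑ v, G.curvature v :=
        Finset.sum_le_sum_of_subset_of_nonneg (Finset.subset_univ _) fun v _ _ => hpos v

end PlaneGraph

/-- In a planar PCC graph, the number of vertices whose
face vector is `(5,6,7)` or `(3,3,5,7)` is at most 210. -/
theorem pcc_card_delta_vertices_le_210 (G : PlaneGraph) (hG : G.IsPCC) :
    {v : G.Vertex | G.faceVector v = {5, 6, 7} ∨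
      G.faceVector v = {3, 3, 5, 7}}.ncard ≤ 210 := by
  obtain ⟨-, -, -, hsphere, -, hpos, -, -⟩ := hG
  set S := {v : G.Vertex | G.faceVector v = {5, 6, 7} ∨ G.faceVector v = {3, 3, 5, 7}}
  have hcurv : ∀ v ∈ S, (1 / 105 : ℚ) ≤ G.curvature v := by
    rintro v (h | h) <;> rw [G.curvature_eq_of_faceVector, h] <;> norm_num
  have hbound := G.ncard_mul_le_sum_curvature (fun v => (hpos v).le) hcurv
  rw [G.sum_curvature_eq_two hsphere] at hbound
  exact_mod_cast (by linarith : (S.ncard : ℚ) ≤ 210)
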